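/- Let k, ℓ be even positive integers, ν a non-negative integer, f : ℍ → ℂ a smooth function annihilated by the weight 2-k hyperbolic Laplacian Δ_{2-k}, and g : ℍ → ℂ holomorphic. Then L_{2ν-k+ℓ+2}([f,g]_ν) = (4π)^{-ν} C(k-2, ν) · L_{2-k}(f) · R_ℓ^ν(g), where the Rankin-Cohen bracket is taken with f of weight 2-k and g of weight ℓ. -/

import Mathlib

open Complex Finset
open scoped Real

/-- Generalized binomial coefficient `C(x, m) = x(x-1)⋯(x-m+1)/m!`. -/
noncomputable def gchoose (x : ℂ) (m : ℕ) : ℂ :=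
  (∏ i ∈ Finset.range m, (x - i)) / (Nat.factorial m)

/-- Wirtinger derivative `∂/∂τ`. -/
noncomputable def wderiv (f : ℂ → ℂ) (τ : ℂ) : ℂ :=
  (fderiv ℝ f τ 1 - Complex.I * fderiv ℝ f τ Complex.I) / 2

/-- Wirtinger derivative `∂/∂τ̄`. -/
noncomputable def wderivBar (f : ℂ → ℂ) (τ : ℂ) : ℂ :=
  (fderiv ℝ f τ 1 + Complex.I * fderiv ℝ f τ Complex.I) / 2

/-- Iterated Wirtinger derivative `∂^n/∂τ^n`. -/
noncomputable def wderivN : ℕ → (ℂ → ℂ) → (ℂ → ℂ)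
  | 0, f => f
  | n + 1, f => wderiv (wderivN n f)

/-- The ν-th Rankin-Cohen bracket of `f` (weight `k`) and `g` (weight `ℓ`). -/
noncomputable def RC (k l : ℂ) (ν : ℕ) (f g : ℂ → ℂ) (τ : ℂ) : ℂ :=
  (2 * (π : ℂ) * Complex.I)⁻¹ ^ ν *
    ∑ μ ∈ Finset.range (ν + 1), (-1 : ℂ) ^ μ * gchoose (k + ν - 1) (ν - μ) *
      gchoose (l + ν - 1) μ * wderivN μ f τ * wderivN (ν - μ) g τ

/-- The Maass lowering operator `L_κ := -2i y² ∂/∂τ̄` (independent of the weight `κ`). -/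
noncomputable def lower (f : ℂ → ℂ) (τ : ℂ) : ℂ :=
  -2 * Complex.I * (τ.im : ℂ) ^ 2 * wderivBar f τ

/-- The weight `κ` hyperbolic Laplacian `Δ_κ := -y²(∂²/∂x²+∂²/∂y²) + iκy(∂/∂x + i∂/∂y)`. -/
noncomputable def hypLaplacian (κ : ℂ) (f : ℂ → ℂ) (τ : ℂ) : ℂ :=
  -(τ.im : ℂ) ^ 2 *
      (fderiv ℝ (fun z => fderiv ℝ f z 1) τ 1 +
        fderiv ℝ (fun z => fderiv ℝ f z Complex.I) τ Complex.I) +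
    Complex.I * κ * (τ.im : ℂ) * (fderiv ℝ f τ 1 + Complex.I * fderiv ℝ f τ Complex.I)

/-- The Maass raising operator `R_k := 2i ∂/∂τ + k y⁻¹`. -/
noncomputable def raise (k : ℂ) (f : ℂ → ℂ) (τ : ℂ) : ℂ :=
  2 * Complex.I * wderiv f τ + k * (τ.im : ℂ)⁻¹ * f τ

/-- The iterate `R_k^n := R_{k+2(n-1)} ∘ ⋯ ∘ R_{k+2} ∘ R_k`, with `R_k^0 = id`. -/
noncomputable def raiseIter (k : ℂ) : ℕ → (ℂ → ℂ) → (ℂ → ℂ)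
  | 0, f => f
  | n + 1, f => raise (k + 2 * n) (raiseIter k n f)

open scoped Topology
section helpers
variable {f g u v : ℂ → ℂ} {τ : ℂ} {c : ℂ}

lemma wderiv_congr (h : f =ᶠ[𝓝 τ] g) : wderiv f τ = wderiv g τ := by
  unfold wderiv; rw [h.fderiv_eq]

lemma wderivBar_congr (h : f =ᶠ[𝓝 τ] g) : wderivBar f τ = wderivBar g τ := by
  unfold wderivBar; rw [h.fderiv_eq]

lemma contDiff_dd (v : ℂ) (hf : ContDiff ℝ (⊤ : ℕ∞) f) : ContDiff ℝ (⊤ : ℕ∞) (fun τ => fderiv ℝ f τ v) :=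
  (ContinuousLinearMap.apply ℝ ℂ v).contDiff.comp (hf.fderiv_right (by simp))

lemma ContDiff.wderiv' (hf : ContDiff ℝ (⊤ : ℕ∞) f) : ContDiff ℝ (⊤ : ℕ∞) (wderiv f) := by
  unfold wderiv
  exact (((contDiff_dd 1 hf).sub (contDiff_const.mul (contDiff_dd Complex.I hf))).div_const 2)

lemma ContDiff.wderivBar' (hf : ContDiff ℝ (⊤ : ℕ∞) f) : ContDiff ℝ (⊤ : ℕ∞) (wderivBar f) := by
  unfold wderivBar
  exact (((contDiff_dd 1 hf).add (contDiff_const.mul (contDiff_dd Complex.I hf))).div_const 2)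

lemma ContDiff.wderivN' (hf : ContDiff ℝ (⊤ : ℕ∞) f) (n : ℕ) : ContDiff ℝ (⊤ : ℕ∞) (wderivN n f) := by
  induction n with
  | zero => exact hf
  | succ n ih => exact ih.wderiv'

lemma wderiv_const_mul (hu : DifferentiableAt ℝ u τ) :
    wderiv (fun z => c * u z) τ = c * wderiv u τ := by
  unfold wderiv; rw [fderiv_const_mul hu c]; simp [smul_eq_mul]; ring

lemma wderivBar_const_mul (hu : DifferentiableAt ℝ u τ) :
    wderivBar (fun z => c * u z) τ = c * wderivBar u τ := by
  unfold wderivBar; rw [fderiv_const_mul hu c]; simp [smul_eq_mul]; ring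

lemma wderiv_mul (hu : DifferentiableAt ℝ u τ) (hv : DifferentiableAt ℝ v τ) :
    wderiv (fun z => u z * v z) τ = wderiv u τ * v τ + u τ * wderiv v τ := by
  unfold wderiv; rw [fderiv_fun_mul hu hv]; simp [smul_eq_mul]; ring

lemma wderivBar_mul (hu : DifferentiableAt ℝ u τ) (hv : DifferentiableAt ℝ v τ) :
    wderivBar (fun z => u z * v z) τ = wderivBar u τ * v τ + u τ * wderivBar v τ := by
  unfold wderivBar; rw [fderiv_fun_mul hu hv]; simp [smul_eq_mul]; ring

lemma wderivBar_sum {ι : Type*} (s : Finset ι) (F : ι → ℂ → ℂ)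
    (hF : ∀ i ∈ s, DifferentiableAt ℝ (F i) τ) :
    wderivBar (fun z => ∑ i ∈ s, F i z) τ = ∑ i ∈ s, wderivBar (F i) τ := by
  unfold wderivBar
  rw [fderiv_fun_sum hF]
  rw [ContinuousLinearMap.sum_apply, ContinuousLinearMap.sum_apply, Finset.mul_sum,
    ← Finset.sum_add_distrib, Finset.sum_div]

lemma wderiv_sum {ι : Type*} (s : Finset ι) (F : ι → ℂ → ℂ)
    (hF : ∀ i ∈ s, DifferentiableAt ℝ (F i) τ) :
    wderiv (fun z => ∑ i ∈ s, F i z) τ = ∑ i ∈ s, wderiv (F i) τ := by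
  unfold wderiv
  rw [fderiv_fun_sum hF]
  rw [ContinuousLinearMap.sum_apply, ContinuousLinearMap.sum_apply, Finset.mul_sum,
    ← Finset.sum_sub_distrib, Finset.sum_div]

lemma fderiv_holo (hg : DifferentiableAt ℂ g τ) (v : ℂ) : fderiv ℝ g τ v = v * deriv g τ := by
  rw [(hg.hasFDerivAt.restrictScalars ℝ).fderiv]
  simp [ContinuousLinearMap.restrictScalars]
  have h := map_smul (fderiv ℂ g τ) v 1
  rw [smul_eq_mul, smul_eq_mul, mul_one] at h
  exact h

lemma wderivBar_holo (hg : DifferentiableAt ℂ g τ) : wderivBar g τ = 0 := by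
  unfold wderivBar; rw [fderiv_holo hg, fderiv_holo hg]
  simp [Complex.I_sq]; ring_nf
  rw [Complex.I_sq]; ring

lemma wderiv_holo (hg : DifferentiableAt ℂ g τ) : wderiv g τ = deriv g τ := by
  unfold wderiv; rw [fderiv_holo hg, fderiv_holo hg]
  ring_nf; rw [Complex.I_sq]; ring
end helpers

section helpers2
variable {f g u v : ℂ → ℂ} {τ : ℂ} {c : ℂ}

lemma dd_eval (hf : ContDiff ℝ (⊤ : ℕ∞) f) (w v : ℂ) :
    fderiv ℝ (fun z => fderiv ℝ f z w) τ v = fderiv ℝ (fderiv ℝ f) τ v w := by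
  have h1 : DifferentiableAt ℝ (fderiv ℝ f) τ :=
    ((hf.fderiv_right (m := (⊤ : ℕ∞)) ((by simp))).differentiable (by simp)).differentiableAt
  have : (fun z => fderiv ℝ f z w) = (ContinuousLinearMap.apply ℝ ℂ w) ∘ (fderiv ℝ f) := rfl
  rw [this, fderiv_comp τ (ContinuousLinearMap.apply ℝ ℂ w).differentiableAt h1]
  simp

lemma dd_symm (hf : ContDiff ℝ (⊤ : ℕ∞) f) (w v : ℂ) :
    fderiv ℝ (fun z => fderiv ℝ f z w) τ v = fderiv ℝ (fun z => fderiv ℝ f z v) τ w := by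
  rw [dd_eval hf, dd_eval hf]
  exact (hf.contDiffAt.isSymmSndFDerivAt (by simp; exact WithTop.coe_le_coe.mpr le_top)).eq v w

lemma diffAt_dd (hf : ContDiff ℝ (⊤ : ℕ∞) f) (w : ℂ) :
    DifferentiableAt ℝ (fun z => fderiv ℝ f z w) τ :=
  ((contDiff_dd w hf).differentiable (by simp)).differentiableAt

/-- key second-order computation: `∂τ ∂τ̄ f = (f_xx + f_yy)/4`. -/
lemma wderiv_wderivBar (hf : ContDiff ℝ (⊤ : ℕ∞) f) :
    wderiv (wderivBar f) τ =
      (fderiv ℝ (fun z => fderiv ℝ f z 1) τ 1 +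
        fderiv ℝ (fun z => fderiv ℝ f z Complex.I) τ Complex.I) / 4 := by
  have hA := diffAt_dd (τ := τ) hf (1:ℂ)
  have hB := diffAt_dd (τ := τ) hf (Complex.I)
  have hBar : wderivBar f = fun z =>
      (fderiv ℝ f z 1 + Complex.I * fderiv ℝ f z Complex.I) / 2 := rfl
  have hdiff : ∀ vv : ℂ, fderiv ℝ (wderivBar f) τ vv =
      (fderiv ℝ (fun z => fderiv ℝ f z 1) τ vv
        + Complex.I * fderiv ℝ (fun z => fderiv ℝ f z Complex.I) τ vv) / 2 := by
    intro vv
    rw [hBar]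
    have : (fun z => (fderiv ℝ f z 1 + Complex.I * fderiv ℝ f z Complex.I) / 2)
        = fun z => (2⁻¹ : ℂ) * ((fun z => fderiv ℝ f z 1) z + Complex.I * (fun z => fderiv ℝ f z Complex.I) z) := by
      funext z; ring
    rw [this, fderiv_const_mul (hA.fun_add (hB.const_mul _)), fderiv_fun_add hA (hB.const_mul _),
      fderiv_const_mul hB]
    simp [smul_eq_mul]; ring
  unfold wderiv
  rw [hdiff, hdiff]
  rw [dd_symm hf (1:ℂ) Complex.I]
  ring_nf
  rw [Complex.I_sq]
  ring

/-- commutation of the Wirtinger operators on smooth functions -/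
lemma wderiv_wderivBar_comm (hf : ContDiff ℝ (⊤ : ℕ∞) f) :
    wderivBar (wderiv f) τ = wderiv (wderivBar f) τ := by
  have hA := diffAt_dd (τ := τ) hf (1:ℂ)
  have hB := diffAt_dd (τ := τ) hf (Complex.I)
  have hdiffBar : ∀ vv : ℂ, fderiv ℝ (wderiv f) τ vv =
      (fderiv ℝ (fun z => fderiv ℝ f z 1) τ vv
        - Complex.I * fderiv ℝ (fun z => fderiv ℝ f z Complex.I) τ vv) / 2 := by
    intro vv
    have : wderiv f = fun z => (2⁻¹ : ℂ) * ((fun z => fderiv ℝ f z 1) z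
        - Complex.I * (fun z => fderiv ℝ f z Complex.I) z) := by
      funext z; unfold wderiv; ring
    rw [this, fderiv_const_mul (hA.fun_sub (hB.const_mul _)), fderiv_fun_sub hA (hB.const_mul _),
      fderiv_const_mul hB]
    simp [smul_eq_mul]; ring
  rw [wderiv_wderivBar hf]
  unfold wderivBar
  rw [hdiffBar, hdiffBar]
  rw [dd_symm hf Complex.I (1:ℂ)]
  ring_nf
  rw [Complex.I_sq]
  ring
end helpers2

section helpers3
open scoped Topology
variable {f g u v : ℂ → ℂ} {τ : ℂ} {c : ℂ}

lemma im_zpow_hasFDerivAt (m : ℤ) (hτ : τ.im ≠ 0) :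
    HasFDerivAt (fun z : ℂ => ((z.im : ℂ)) ^ m)
      ((((m : ℂ) * ((τ.im : ℂ)) ^ (m - 1))) • (Complex.ofRealCLM.comp Complex.imCLM)) τ := by
  have h0 : ((τ.im : ℂ)) ≠ 0 := by exact_mod_cast Complex.ofReal_ne_zero.mpr hτ
  have hL : HasFDerivAt (fun z : ℂ => ((z.im : ℂ)))
      (Complex.ofRealCLM.comp Complex.imCLM) τ :=
    (Complex.ofRealCLM.comp Complex.imCLM).hasFDerivAt
  exact (hasDerivAt_zpow m _ (Or.inl h0)).comp_hasFDerivAt τ hL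

lemma diffAt_im_zpow (m : ℤ) (hτ : τ.im ≠ 0) :
    DifferentiableAt ℝ (fun z : ℂ => ((z.im : ℂ)) ^ m) τ :=
  (im_zpow_hasFDerivAt m hτ).differentiableAt

lemma wderiv_im_zpow (m : ℤ) (hτ : τ.im ≠ 0) :
    wderiv (fun z : ℂ => ((z.im : ℂ)) ^ m) τ
      = -(Complex.I / 2) * (m : ℂ) * ((τ.im : ℂ)) ^ (m - 1) := by
  unfold wderiv
  rw [(im_zpow_hasFDerivAt m hτ).fderiv]
  simp [smul_eq_mul]
  ring

/-- consequence of harmonicity: `∂τ (∂τ̄ f) = iκ/(2y) ∂τ̄ f`. -/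
lemma wderiv_wderivBar_of_harm {κ : ℂ} (hf : ContDiff ℝ (⊤ : ℕ∞) f)
    (hharm : hypLaplacian κ f τ = 0) (hτ : 0 < τ.im) :
    wderiv (wderivBar f) τ = Complex.I * κ / (2 * (τ.im : ℂ)) * wderivBar f τ := by
  have hy : ((τ.im : ℂ)) ≠ 0 := by
    exact_mod_cast Complex.ofReal_ne_zero.mpr (ne_of_gt hτ)
  have h1 : fderiv ℝ (fun z => fderiv ℝ f z 1) τ 1 +
      fderiv ℝ (fun z => fderiv ℝ f z Complex.I) τ Complex.I
      = 4 * wderiv (wderivBar f) τ := by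
    rw [wderiv_wderivBar hf]; ring
  have h2 : fderiv ℝ f τ 1 + Complex.I * fderiv ℝ f τ Complex.I = 2 * wderivBar f τ := by
    unfold wderivBar; ring
  unfold hypLaplacian at hharm
  rw [h1, h2] at hharm
  have h3 : wderiv (wderivBar f) τ * (2 * (τ.im : ℂ)) * (τ.im : ℂ)
      = Complex.I * κ * wderivBar f τ * (τ.im : ℂ) := by
    linear_combination (-(1:ℂ)/2) * hharm
  replace h3 := mul_right_cancel₀ hy h3
  rw [div_mul_eq_mul_div, eq_div_iff (mul_ne_zero two_ne_zero hy)]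
  linear_combination h3

lemma analyticOnNhd_iter_deriv (hg : DifferentiableOn ℂ g {τ : ℂ | 0 < τ.im}) (r : ℕ) :
    AnalyticOnNhd ℂ (deriv^[r] g) {τ : ℂ | 0 < τ.im} := by
  induction r with
  | zero => exact hg.analyticOnNhd (isOpen_lt continuous_const Complex.continuous_im)
  | succ r ih => rw [Function.iterate_succ_apply']; exact ih.deriv

lemma wderivN_holo_eq (hg : DifferentiableOn ℂ g {τ : ℂ | 0 < τ.im}) (r : ℕ) :
    ∀ τ ∈ {τ : ℂ | 0 < τ.im}, wderivN r g τ = deriv^[r] g τ := by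
  induction r with
  | zero => intro τ _; rfl
  | succ r ih =>
    intro τ hτ
    have hev : wderivN r g =ᶠ[𝓝 τ] deriv^[r] g :=
      Filter.eventuallyEq_of_mem
        ((isOpen_lt continuous_const Complex.continuous_im).mem_nhds hτ) ih
    show wderiv (wderivN r g) τ = _
    rw [Function.iterate_succ_apply' deriv r g]
    rw [wderiv_congr hev, wderiv_holo ((analyticOnNhd_iter_deriv hg r τ hτ).differentiableAt)]

lemma diffAt_wderivN_holo (hg : DifferentiableOn ℂ g {τ : ℂ | 0 < τ.im}) (r : ℕ)
    (hτ : 0 < τ.im) : DifferentiableAt ℝ (wderivN r g) τ := by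
  have hev : wderivN r g =ᶠ[𝓝 τ] deriv^[r] g :=
    Filter.eventuallyEq_of_mem
      ((isOpen_lt continuous_const Complex.continuous_im).mem_nhds hτ) (wderivN_holo_eq hg r)
  exact hev.differentiableAt_iff.mpr
    ((analyticOnNhd_iter_deriv hg r τ hτ).differentiableAt.restrictScalars ℝ)

lemma wderivBar_wderivN_holo (hg : DifferentiableOn ℂ g {τ : ℂ | 0 < τ.im}) (r : ℕ)
    (hτ : 0 < τ.im) : wderivBar (wderivN r g) τ = 0 := by
  have hev : wderivN r g =ᶠ[𝓝 τ] deriv^[r] g :=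
    Filter.eventuallyEq_of_mem
      ((isOpen_lt continuous_const Complex.continuous_im).mem_nhds hτ) (wderivN_holo_eq hg r)
  rw [wderivBar_congr hev,
    wderivBar_holo ((analyticOnNhd_iter_deriv hg r τ hτ).differentiableAt)]

end helpers3

section helpers4
open scoped Topology
variable {f g u v : ℂ → ℂ} {τ : ℂ} {c : ℂ}

lemma wderivBar_wderivN (hf : ContDiff ℝ (⊤ : ℕ∞) f) (μ : ℕ) :
    wderivBar (wderivN μ f) = wderivN μ (wderivBar f) := by
  induction μ with
  | zero => rfl
  | succ μ ih =>
    funext τ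
    show wderivBar (wderiv (wderivN μ f)) τ = wderiv (wderivN μ (wderivBar f)) τ
    rw [wderiv_wderivBar_comm (hf.wderivN' μ), ← ih]

lemma wderivN_bar_formula {κ : ℂ} (hf : ContDiff ℝ (⊤ : ℕ∞) f)
    (hharm : ∀ τ : ℂ, 0 < τ.im → hypLaplacian κ f τ = 0) (μ : ℕ) :
    ∀ τ : ℂ, 0 < τ.im → wderivN μ (wderivBar f) τ =
      (Complex.I / 2) ^ μ * (∏ j ∈ Finset.range μ, (κ + j)) * ((τ.im : ℂ)) ^ (-(μ:ℤ)) *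
        wderivBar f τ := by
  induction μ with
  | zero => intro τ hτ; simp [wderivN]
  | succ μ ih =>
    intro τ hτ
    have hy : ((τ.im : ℂ)) ≠ 0 := by
      exact_mod_cast Complex.ofReal_ne_zero.mpr (ne_of_gt hτ)
    set C : ℂ := (Complex.I / 2) ^ μ * (∏ j ∈ Finset.range μ, (κ + j)) with hC
    have hev : wderivN μ (wderivBar f) =ᶠ[𝓝 τ]
        (fun z => C * (((z.im : ℂ)) ^ (-(μ:ℤ)) * wderivBar f z)) := by
      apply Filter.eventuallyEq_of_mem
        ((isOpen_lt continuous_const Complex.continuous_im).mem_nhds hτ)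
      intro z hz
      rw [ih z hz]; ring
    have hdiffP : DifferentiableAt ℝ (fun z : ℂ => ((z.im : ℂ)) ^ (-(μ:ℤ))) τ :=
      diffAt_im_zpow _ (ne_of_gt hτ)
    have hdiffh : DifferentiableAt ℝ (wderivBar f) τ :=
      (hf.wderivBar'.differentiable (by simp)).differentiableAt
    show wderiv (wderivN μ (wderivBar f)) τ = _
    rw [wderiv_congr hev, wderiv_const_mul (hdiffP.fun_mul hdiffh),
      wderiv_mul hdiffP hdiffh, wderiv_im_zpow _ (ne_of_gt hτ),
      wderiv_wderivBar_of_harm hf (hharm τ hτ) hτ]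
    rw [Finset.prod_range_succ]
    set X : ℂ := ((τ.im:ℂ)) ^ (-(μ:ℤ) - 1) with hX
    have e1 : ((τ.im:ℂ)) ^ (-(μ:ℤ)) = (τ.im:ℂ) * X := by
      rw [hX, show -(μ:ℤ) = (-(μ:ℤ)-1)+1 by ring, zpow_add_one₀ hy]; ring
    have e2 : ((τ.im:ℂ)) ^ (-((μ+1 : ℕ) : ℤ)) = X := by
      rw [hX]; congr 1; push_cast; ring
    rw [e1, e2, hC, div_pow]
    field_simp
    have h2 : ((1:ℂ)/2)^μ * 2^μ = 1 := by rw [← mul_pow]; norm_num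
    push_cast
    linear_combination (-(Complex.I * Complex.I ^ μ * κ * ∏ x ∈ Finset.range μ, (κ + (x:ℂ))) * X * wderivBar f τ
      - (Complex.I * Complex.I ^ μ * ∏ x ∈ Finset.range μ, (κ + (x:ℂ))) * X * wderivBar f τ * (μ:ℂ)) * h2
end helpers4

section helpers5
open scoped Topology
variable {g : ℂ → ℂ} {τ : ℂ}

lemma choose_coeff_identity (l : ℂ) (ν r : ℕ) (hr : r ≤ ν) :
    (((ν+1).choose (r+1) : ℕ) : ℂ) * (∏ j ∈ Finset.Ico (r+1) (ν+1), (l + j))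
      = ((ν.choose (r+1) : ℕ) : ℂ) * (∏ j ∈ Finset.Ico (r+1) ν, (l + j)) * (l + ν + 1 + r)
        + ((ν.choose r : ℕ) : ℂ) * (∏ j ∈ Finset.Ico r ν, (l + j)) := by
  rcases eq_or_lt_of_le hr with rfl | hlt
  · simp [Nat.choose_succ_self]
  · have h1 : ∏ j ∈ Finset.Ico (r+1) (ν+1), (l + (j:ℂ))
        = (∏ j ∈ Finset.Ico (r+1) ν, (l + (j:ℂ))) * (l + ν) :=
      Finset.prod_Ico_succ_top (by omega) _
    have h2 : ∏ j ∈ Finset.Ico r ν, (l + (j:ℂ))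
        = (l + r) * ∏ j ∈ Finset.Ico (r+1) ν, (l + (j:ℂ)) :=
      Finset.prod_eq_prod_Ico_succ_bot hlt _
    have hpascal : (((ν+1).choose (r+1) : ℕ) : ℂ)
        = ((ν.choose r : ℕ) : ℂ) + ((ν.choose (r+1) : ℕ) : ℂ) := by
      rw [Nat.choose_succ_succ]; push_cast; ring
    have hkey : ((ν.choose (r+1) : ℕ) : ℂ) * ((r:ℂ)+1) = ((ν.choose r : ℕ) : ℂ) * ((ν:ℂ) - r) := by
      have := Nat.choose_succ_right_eq ν r
      have hcast : ((ν.choose (r+1) * (r+1) : ℕ) : ℂ) = ((ν.choose r * (ν - r) : ℕ) : ℂ) := by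
        exact_mod_cast congrArg (Nat.cast : ℕ → ℂ) this
      push_cast [Nat.cast_sub hlt.le] at hcast
      linear_combination hcast
    rw [h1, h2, hpascal]
    linear_combination (-(∏ j ∈ Finset.Ico (r+1) ν, (l + (j:ℂ)))) * hkey

lemma raiseIter_formula (l : ℂ) (hg : DifferentiableOn ℂ g {τ : ℂ | 0 < τ.im}) (ν : ℕ) :
    ∀ τ : ℂ, 0 < τ.im → raiseIter l ν g τ =
      ∑ r ∈ Finset.range (ν+1), ((ν.choose r : ℕ) : ℂ) * (∏ j ∈ Finset.Ico r ν, (l + j)) *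
        ((τ.im : ℂ)) ^ ((r:ℤ) - ν) * (2 * Complex.I) ^ r * deriv^[r] g τ := by
  induction ν with
  | zero => intro τ hτ; simp [raiseIter]
  | succ ν ih =>
    intro τ hτ
    have hy : ((τ.im : ℂ)) ≠ 0 := by
      exact_mod_cast Complex.ofReal_ne_zero.mpr (ne_of_gt hτ)
    set c : ℕ → ℂ := fun r => ((ν.choose r : ℕ) : ℂ) * (∏ j ∈ Finset.Ico r ν, (l + j)) with hc
    set G : ℕ → ℂ → ℂ := fun r => deriv^[r] g with hG
    -- differentiability facts
    have hGdiff : ∀ r, DifferentiableAt ℝ (G r) τ :=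
      fun r => ((analyticOnNhd_iter_deriv hg r) τ hτ).differentiableAt.restrictScalars ℝ
    have hTdiff : ∀ r : ℕ, DifferentiableAt ℝ
        (fun z : ℂ => c r * (((z.im : ℂ)) ^ ((r:ℤ) - ν) * ((2 * Complex.I) ^ r * G r z))) τ :=
      fun r => (((diffAt_im_zpow _ (ne_of_gt hτ)).mul ((hGdiff r).const_mul _)).const_mul _)
    have hev : raiseIter l ν g =ᶠ[𝓝 τ]
        (fun z => ∑ r ∈ Finset.range (ν+1),
          c r * (((z.im : ℂ)) ^ ((r:ℤ) - ν) * ((2 * Complex.I) ^ r * G r z))) := by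
      apply Filter.eventuallyEq_of_mem
        ((isOpen_lt continuous_const Complex.continuous_im).mem_nhds hτ)
      intro z hz
      rw [ih z hz]
      exact Finset.sum_congr rfl (fun r _ => by ring)
    show raise (l + 2 * ν) (raiseIter l ν g) τ = _
    unfold raise
    rw [wderiv_congr hev, wderiv_sum _ _ (fun r _ => hTdiff r), ih τ hτ]
    -- compute each wderiv term
    have hterm : ∀ r ∈ Finset.range (ν+1),
        wderiv (fun z : ℂ => c r * (((z.im : ℂ)) ^ ((r:ℤ) - ν) * ((2 * Complex.I) ^ r * G r z))) τ
          = c r * ((-(Complex.I/2) * ((r:ℂ) - ν) * ((τ.im:ℂ)) ^ ((r:ℤ) - ν - 1))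
                * ((2 * Complex.I) ^ r * G r τ)
              + ((τ.im:ℂ)) ^ ((r:ℤ) - ν) * ((2 * Complex.I) ^ r * G (r+1) τ)) := by
      intro r _
      rw [wderiv_const_mul ((diffAt_im_zpow _ (ne_of_gt hτ)).fun_mul ((hGdiff r).const_mul _)),
        wderiv_mul (diffAt_im_zpow _ (ne_of_gt hτ)) ((hGdiff r).const_mul _),
        wderiv_const_mul (hGdiff r), wderiv_im_zpow _ (ne_of_gt hτ),
        wderiv_holo ((analyticOnNhd_iter_deriv hg r) τ hτ).differentiableAt]
      have hd : deriv (G r) = G (r+1) := (Function.iterate_succ_apply' deriv r g).symm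
      rw [hd]
      push_cast
      ring
    rw [Finset.sum_congr rfl hterm]
    rw [Finset.mul_sum, Finset.mul_sum, ← Finset.sum_add_distrib]
    set s1 : ℕ → ℂ := fun r => ((ν.choose r : ℕ) : ℂ) * (∏ j ∈ Finset.Ico r ν, (l + j)) *
        (l + ν + r) * ((τ.im:ℂ)) ^ ((r:ℤ) - (ν:ℤ) - 1) * (2 * Complex.I) ^ r *
        deriv^[r] g τ with hs1
    set s2 : ℕ → ℂ := fun r => ((ν.choose r : ℕ) : ℂ) * (∏ j ∈ Finset.Ico r ν, (l + j)) *
        ((τ.im:ℂ)) ^ ((r:ℤ) - (ν:ℤ)) * (2 * Complex.I) ^ (r+1) *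
        deriv^[r+1] g τ with hs2
    conv_rhs => rw [Finset.sum_range_succ']
    trans (∑ r ∈ Finset.range (ν+1), (s1 r + s2 r))
    · refine Finset.sum_congr rfl (fun r hr => ?_)
      have e : ((τ.im:ℂ)) ^ ((r:ℤ) - (ν:ℤ))
          = ((τ.im:ℂ)) ^ ((r:ℤ) - (ν:ℤ) - 1) * (τ.im:ℂ) := by
        rw [← zpow_add_one₀ hy]; congr 1; ring
      simp only [hs1, hs2, hc, hG]
      rw [e, pow_succ]
      have hIs : (Complex.I:ℂ)^2 = -1 := Complex.I_sq
      have hyc : (τ.im:ℂ) * ((τ.im:ℂ))⁻¹ = 1 := mul_inv_cancel₀ hy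
      linear_combination (-((((ν.choose r : ℕ):ℂ) * ∏ j ∈ Finset.Ico r ν, (l + j)) *
          ((τ.im:ℂ) ^ ((r:ℤ) - (ν:ℤ) - 1)) * (2*Complex.I)^r * deriv^[r] g τ *
          ((r:ℂ) - ν))) * hIs
        + ((((ν.choose r : ℕ):ℂ) * ∏ j ∈ Finset.Ico r ν, (l + j)) *
          ((τ.im:ℂ) ^ ((r:ℤ) - (ν:ℤ) - 1)) * (2*Complex.I)^r * deriv^[r] g τ *
          (l + 2*ν)) * hyc
    · rw [Finset.sum_add_distrib]
      have h0 : s1 (ν+1) = 0 := by simp [hs1, Nat.choose_succ_self]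
      have hA : ∑ r ∈ Finset.range (ν+1), s1 r
          = (∑ r ∈ Finset.range (ν+1), s1 (r+1)) + s1 0 := by
        rw [Finset.sum_range_succ' s1 ν, Finset.sum_range_succ (fun r => s1 (r+1)) ν, h0,
          add_zero]
      rw [hA, add_assoc, add_comm (s1 0) (∑ x ∈ Finset.range (ν + 1), s2 x), ← add_assoc,
        ← Finset.sum_add_distrib]
      congr 1
      · refine Finset.sum_congr rfl (fun r hr => ?_)
        have hrν : r ≤ ν := Finset.mem_range_succ_iff.mp hr
        have e1 : (((r+1 : ℕ)):ℤ) - (((ν+1 : ℕ)):ℤ) = (r:ℤ) - (ν:ℤ) := by push_cast; ring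
        have e2 : (((r+1 : ℕ)):ℤ) - (ν:ℤ) - 1 = (r:ℤ) - (ν:ℤ) := by push_cast; ring
        simp only [hs1, hs2, hc, hG]
        rw [e1, e2]
        rw [choose_coeff_identity l ν r hrν]
        push_cast
        ring
      · simp only [hs1]
        have e3 : ((0:ℕ):ℤ) - (((ν+1 : ℕ)):ℤ) = ((0:ℕ):ℤ) - (ν:ℤ) - 1 := by push_cast; ring
        rw [e3, Finset.prod_Ico_succ_top (Nat.zero_le _)]
        push_cast
        simp [Nat.choose_zero_right]
end helpers5

section coeff
open Complex

lemma claim1 (μ : ℕ) : ((2*(π:ℂ)*Complex.I)⁻¹)^μ * (Complex.I/2)^μ = ((4*(π:ℂ))^μ)⁻¹ := by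
  rw [← mul_pow, ← inv_pow]
  congr 1
  have hπ : (π:ℂ) ≠ 0 := by exact_mod_cast Real.pi_ne_zero
  field_simp
  linear_combination Complex.I_sq * (4*(π:ℂ)) - Complex.I_sq * (4*(π:ℂ))

lemma claim2 (d : ℕ) : ((2*(π:ℂ)*Complex.I)⁻¹)^d * (-1:ℂ)^d
    = ((4*(π:ℂ))^d)⁻¹ * (2*Complex.I)^d := by
  rw [← mul_pow, ← inv_pow, ← mul_pow]
  congr 1
  have hπ : (π:ℂ) ≠ 0 := by exact_mod_cast Real.pi_ne_zero
  field_simp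
  linear_combination (-4:ℂ)*Complex.I_sq

lemma final_coeff (x l : ℂ) (ν μ : ℕ) (hμ : μ ≤ ν) :
    ((2*(π:ℂ)*Complex.I)⁻¹)^ν * ((-1:ℂ)^μ * gchoose (2 - x + ν - 1) (ν-μ) *
      gchoose (l + ν - 1) μ) * ((Complex.I/2)^μ * (∏ j ∈ Finset.range μ, (2 - x + j)))
    = ((4*(π:ℂ))^ν)⁻¹ * gchoose (x-2) ν * ((ν.choose (ν-μ) : ℕ) : ℂ) *
        (∏ j ∈ Finset.Ico (ν-μ) ν, (l + j)) * (2*Complex.I)^(ν-μ) := by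
  obtain ⟨d, rfl⟩ : ∃ d, ν = μ + d := ⟨ν - μ, by omega⟩
  have hd : μ + d - μ = d := by omega
  rw [hd]
  -- product manipulations
  have hγ : (∏ j ∈ Finset.range μ, (2 - x + (j:ℂ)))
      = (-1:ℂ)^μ * ∏ j ∈ Finset.range μ, (x - 2 - (j:ℂ)) := by
    calc (∏ j ∈ Finset.range μ, (2 - x + (j:ℂ)))
        = ∏ j ∈ Finset.range μ, ((-1) * (x - 2 - (j:ℂ))) := by
          refine Finset.prod_congr rfl (fun j _ => by ring)
      _ = (∏ _j ∈ Finset.range μ, (-1:ℂ)) * ∏ j ∈ Finset.range μ, (x - 2 - (j:ℂ)) :=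
          Finset.prod_mul_distrib
      _ = (-1:ℂ)^μ * ∏ j ∈ Finset.range μ, (x - 2 - (j:ℂ)) := by
          rw [Finset.prod_const, Finset.card_range]
  have hβ : (∏ i ∈ Finset.range d, ((2 - x + ((μ+d:ℕ):ℂ) - 1) - (i:ℂ)))
      = (-1:ℂ)^d * ∏ j ∈ Finset.Ico μ (μ+d), (x - 2 - (j:ℂ)) := by
    have h1 : (∏ i ∈ Finset.range d, ((2 - x + ((μ+d:ℕ):ℂ) - 1) - (i:ℂ)))
        = ∏ i ∈ Finset.range d, ((-1) * (x - 2 - ((μ + (d-1-i) : ℕ) : ℂ))) := by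
      refine Finset.prod_congr rfl (fun i hi => ?_)
      have hi' : i < d := Finset.mem_range.mp hi
      have : ((μ + (d-1-i) : ℕ) : ℂ) = (μ:ℂ) + (d:ℂ) - 1 - (i:ℂ) := by
        push_cast [Nat.cast_sub (by omega : i ≤ d - 1), Nat.cast_sub (by omega : 1 ≤ d)]
        ring
      rw [this]
      push_cast
      ring
    rw [h1, Finset.prod_mul_distrib, Finset.prod_const, Finset.card_range]
    congr 1
    rw [Finset.prod_Ico_eq_prod_range]
    have hd2 : μ + d - μ = d := by omega
    rw [hd2]
    exact (Finset.prod_range_reflect (fun t => x - 2 - ((μ + t : ℕ) : ℂ)) d)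
  have hα : (∏ i ∈ Finset.range μ, ((l + ((μ+d:ℕ):ℂ) - 1) - (i:ℂ)))
      = ∏ j ∈ Finset.Ico d (μ+d), (l + (j:ℂ)) := by
    rw [Finset.prod_Ico_eq_prod_range]
    have hd2 : μ + d - d = μ := by omega
    rw [hd2]
    rw [← (Finset.prod_range_reflect (fun t => l + ((d + t : ℕ) : ℂ)) μ)]
    refine Finset.prod_congr rfl (fun i hi => ?_)
    have hi' : i < μ := Finset.mem_range.mp hi
    have : ((d + (μ-1-i) : ℕ) : ℂ) = (d:ℂ) + (μ:ℂ) - 1 - (i:ℂ) := by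
      push_cast [Nat.cast_sub (by omega : i ≤ μ - 1), Nat.cast_sub (by omega : 1 ≤ μ)]
      ring
    rw [this]
    push_cast
    ring
  have hδ : (∏ j ∈ Finset.range μ, (x - 2 - (j:ℂ))) * ∏ j ∈ Finset.Ico μ (μ+d), (x - 2 - (j:ℂ))
      = ∏ j ∈ Finset.range (μ+d), (x - 2 - (j:ℂ)) :=
    Finset.prod_range_mul_prod_Ico _ (by omega)
  have hε : (((μ+d).choose d : ℕ) : ℂ) * ((d.factorial : ℕ) : ℂ) * ((μ.factorial : ℕ) : ℂ)
      = (((μ+d).factorial : ℕ) : ℂ) := by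
    have := Nat.choose_mul_factorial_mul_factorial (show d ≤ μ + d by omega)
    rw [show μ + d - d = μ by omega] at this
    exact_mod_cast congrArg (Nat.cast : ℕ → ℂ) this
  have hfacμ : ((μ.factorial : ℕ) : ℂ) ≠ 0 := by
    exact_mod_cast Nat.cast_ne_zero.mpr (Nat.factorial_ne_zero μ)
  have hfacd : ((d.factorial : ℕ) : ℂ) ≠ 0 := by
    exact_mod_cast Nat.cast_ne_zero.mpr (Nat.factorial_ne_zero d)
  have hfacμd : (((μ+d).factorial : ℕ) : ℂ) ≠ 0 := by
    exact_mod_cast Nat.cast_ne_zero.mpr (Nat.factorial_ne_zero (μ+d))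
  have key : (((μ+d).choose d : ℕ) : ℂ)
      = (((μ+d).factorial : ℕ) : ℂ) / (((d.factorial : ℕ) : ℂ) * ((μ.factorial : ℕ) : ℂ)) := by
    rw [eq_div_iff (mul_ne_zero hfacd hfacμ)]
    linear_combination hε
  have hsq : (-1:ℂ)^μ * (-1:ℂ)^μ = 1 := by rw [← mul_pow]; norm_num
  have h4π : (4*(π:ℂ)) ≠ 0 := by
    have hπ : (π:ℂ) ≠ 0 := by exact_mod_cast Real.pi_ne_zero
    exact mul_ne_zero (by norm_num) hπ
  unfold gchoose
  rw [hγ, hβ, hα, ← hδ, key]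
  trans (((2*(π:ℂ)*Complex.I)⁻¹^μ * (Complex.I/2)^μ) *
      ((2*(π:ℂ)*Complex.I)⁻¹^d * (-1:ℂ)^d) *
      (((-1:ℂ)^μ * (-1:ℂ)^μ) *
        (((∏ j ∈ Finset.Ico μ (μ+d), (x - 2 - (j:ℂ))) *
          (∏ j ∈ Finset.Ico d (μ+d), (l + (j:ℂ))) *
          (∏ j ∈ Finset.range μ, (x - 2 - (j:ℂ)))) /
            (((d.factorial : ℕ) : ℂ) * ((μ.factorial : ℕ) : ℂ)))))
  · ring
  · rw [claim1, claim2, hsq]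
    rw [pow_add, mul_inv ((4*(π:ℂ))^μ) ((4*(π:ℂ))^d)]
    have h4πμ : ((4*(π:ℂ))^μ) ≠ 0 := pow_ne_zero _ h4π
    have h4πd : ((4*(π:ℂ))^d) ≠ 0 := pow_ne_zero _ h4π
    field_simp
end coeff

/-- for `f` harmonic of weight `2-k` and `g` holomorphic of weight `ℓ`,
`L_{2ν-k+ℓ+2}([f,g]_ν) = (4π)^{-ν} C(k-2,ν) L_{2-k}(f) R_ℓ^ν(g)`. -/
theorem lowering_of_RCB (k l : ℕ) (hk : Even k) (hk' : 0 < k) (hl : Even l) (hl' : 0 < l)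
    (ν : ℕ) (f g : ℂ → ℂ) (hf : ContDiff ℝ (⊤ : ℕ∞) f)
    (hharm : ∀ τ : ℂ, 0 < τ.im → hypLaplacian (2 - (k : ℂ)) f τ = 0)
    (hg : DifferentiableOn ℂ g {τ : ℂ | 0 < τ.im})
    (τ : ℂ) (hτ : 0 < τ.im) :
    lower (RC (2 - (k : ℂ)) (l : ℂ) ν f g) τ =
      ((4 * (π : ℂ)) ^ ν)⁻¹ * gchoose ((k : ℂ) - 2) ν * lower f τ * raiseIter (l : ℂ) ν g τ := by
  have hy : ((τ.im : ℂ)) ≠ 0 := by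
    exact_mod_cast Complex.ofReal_ne_zero.mpr (ne_of_gt hτ)
  have hRC : RC (2 - (k : ℂ)) (l : ℂ) ν f g = fun z =>
      (2 * (π : ℂ) * Complex.I)⁻¹ ^ ν *
        ∑ μ ∈ Finset.range (ν + 1), (-1 : ℂ) ^ μ * gchoose ((2 - (k : ℂ)) + ν - 1) (ν - μ) *
          gchoose ((l : ℂ) + ν - 1) μ * wderivN μ f z * wderivN (ν - μ) g z := rfl
  have hFdiff : ∀ μ : ℕ, DifferentiableAt ℝ (fun z =>
      (-1 : ℂ) ^ μ * gchoose ((2 - (k : ℂ)) + ν - 1) (ν - μ) *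
        gchoose ((l : ℂ) + ν - 1) μ * wderivN μ f z * wderivN (ν - μ) g z) τ := by
    intro μ
    exact ((((hf.wderivN' μ).differentiable (by simp)).differentiableAt.const_mul _).mul
      (diffAt_wderivN_holo hg (ν - μ) hτ))
  have hterm2 : ∀ μ ∈ Finset.range (ν + 1), wderivBar (fun z =>
      (-1 : ℂ) ^ μ * gchoose ((2 - (k : ℂ)) + ν - 1) (ν - μ) *
        gchoose ((l : ℂ) + ν - 1) μ * wderivN μ f z * wderivN (ν - μ) g z) τ
      = ((-1 : ℂ) ^ μ * gchoose ((2 - (k : ℂ)) + ν - 1) (ν - μ) * gchoose ((l : ℂ) + ν - 1) μ) *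
          ((Complex.I / 2) ^ μ * (∏ j ∈ Finset.range μ, ((2 - (k : ℂ)) + j)) *
            ((τ.im : ℂ)) ^ (-(μ:ℤ)) * wderivBar f τ) * deriv^[ν - μ] g τ := by
    intro μ _
    rw [wderivBar_mul (((hf.wderivN' μ).differentiable (by simp)).differentiableAt.const_mul _)
      (diffAt_wderivN_holo hg (ν - μ) hτ)]
    rw [wderivBar_wderivN_holo hg (ν - μ) hτ, mul_zero, add_zero]
    rw [wderivBar_const_mul ((hf.wderivN' μ).differentiable (by simp)).differentiableAt]
    rw [congrFun (wderivBar_wderivN hf μ) τ, wderivN_bar_formula hf hharm μ τ hτ]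
    rw [wderivN_holo_eq hg (ν - μ) τ hτ]
  unfold lower
  rw [hRC]
  rw [wderivBar_const_mul (DifferentiableAt.fun_sum (fun μ _ => hFdiff μ))]
  rw [wderivBar_sum _ _ (fun μ _ => hFdiff μ)]
  rw [Finset.sum_congr rfl hterm2]
  rw [raiseIter_formula (l : ℂ) hg ν τ hτ]
  conv_rhs => rw [← Finset.sum_range_reflect]
  simp only [Nat.add_sub_cancel]
  rw [Finset.mul_sum, Finset.mul_sum, Finset.mul_sum]
  refine Finset.sum_congr rfl (fun μ hμ' => ?_)
  have hμ : μ ≤ ν := Finset.mem_range_succ_iff.mp hμ'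
  have ez : (((ν - μ : ℕ)) : ℤ) - (ν : ℤ) = -(μ:ℤ) := by omega
  rw [ez]
  linear_combination ((-2 * Complex.I * ((τ.im : ℂ))^2) * ((τ.im : ℂ)) ^ (-(μ:ℤ)) *
    wderivBar f τ * deriv^[ν - μ] g τ) * final_coeff (k : ℂ) (l : ℂ) ν μ hμ
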